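/- arXiv:1612.03985 — 2 statements merged into one kernel-verified Lean document; each statement's English description precedes it below -/
import Mathlib

section
/- Suppose N ≥ 1 users are homogeneous, i.e., they share the same polytope Q (same finite state space S, discount factor β, transition matrices H⁰, H¹, and initial vector α) and the same reward vector R : S → ℝ, and let M > 0 be the resource level. Let x_1, …, x_N with x_n = (x_n⁰, x_n¹) satisfy x_n ∈ Q for every n, together with the resource constraint Σ_{n=1}^N Σ_{s∈S} x_{n,s}¹ = M/(1−β). Define x̃ = (x̃⁰, x̃¹) by x̃⁰ = (1/N) Σ_{n=1}^N x_n⁰ and x̃¹ = (1/N) Σ_{n=1}^N x_n¹. Then: (i) x̃ ∈ Q; (ii) the symmetric allocation assigning x̃ to every user satisfies the resource constraint, i.e., N · Σ_{s∈S} x̃_s¹ = M/(1−β); and (iii) the total objective value is unchanged: Σ_{n=1}^N Σ_{s∈S} R_s (x_{n,s}⁰ + x_{n,s}¹) = N · Σ_{s∈S} R_s (x̃_s⁰ + x̃_s¹). Consequently, if the original allocation is optimal for the restless-bandit linear program, then the symmetric allocation (x̃, …, x̃), which gives every user equal active and passive service time in each state, is also optimal. -/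
/-- Membership in the restless-bandit polytope `Q`: both performance-measure
vectors are nonnegative and the balance equations hold. -/
def inPolytope {S : Type*} [Fintype S] (β : ℝ) (H0 H1 : Matrix S S ℝ)
    (α : S → ℝ) (x0 x1 : S → ℝ) : Prop :=
  (∀ s, 0 ≤ x0 s) ∧ (∀ s, 0 ≤ x1 s) ∧
  ∀ j, x0 j + x1 j = α j + β * ∑ i, (H0 i j * x0 i + H1 i j * x1 i)

/-- For homogeneous users, averaging an allocation yields a feasible symmetric
allocation with the same total objective value; hence if the original
allocation is optimal for the restless-bandit LP, so is the symmetric one. -/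
theorem symmetric_allocation_optimal {S : Type*} [Fintype S]
    (β : ℝ) (hβ0 : 0 < β) (hβ1 : β < 1)
    (H0 H1 : Matrix S S ℝ)
    (hH0 : ∀ i j, 0 ≤ H0 i j) (hH1 : ∀ i j, 0 ≤ H1 i j)
    (α : S → ℝ) (hα : ∀ s, 0 ≤ α s)
    (R : S → ℝ)
    (N : ℕ) (hN : 1 ≤ N) (M : ℝ) (hM : 0 < M)
    (x0 x1 : Fin N → S → ℝ)
    (hx : ∀ n, inPolytope β H0 H1 α (x0 n) (x1 n))
    (hres : ∑ n, ∑ s, x1 n s = M / (1 - β)) :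
    -- (i) the average belongs to Q
    inPolytope β H0 H1 α
      (fun s => (1 / (N : ℝ)) * ∑ n, x0 n s)
      (fun s => (1 / (N : ℝ)) * ∑ n, x1 n s) ∧
    -- (ii) the symmetric allocation satisfies the resource constraint
    (N : ℝ) * ∑ s, (1 / (N : ℝ)) * ∑ n, x1 n s = M / (1 - β) ∧
    -- (iii) the total objective value is unchanged
    (∑ n, ∑ s, R s * (x0 n s + x1 n s)
      = (N : ℝ) * ∑ s, R s * ((1 / (N : ℝ)) * ∑ n, x0 n s
          + (1 / (N : ℝ)) * ∑ n, x1 n s)) ∧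
    -- consequently: optimality of the original allocation implies optimality
    -- of the symmetric allocation assigning the average to every user
    ((∀ y0 y1 : Fin N → S → ℝ,
        (∀ n, inPolytope β H0 H1 α (y0 n) (y1 n)) →
        (∑ n, ∑ s, y1 n s = M / (1 - β)) →
        ∑ n, ∑ s, R s * (y0 n s + y1 n s)
          ≤ ∑ n, ∑ s, R s * (x0 n s + x1 n s)) →
      ∀ y0 y1 : Fin N → S → ℝ,
        (∀ n, inPolytope β H0 H1 α (y0 n) (y1 n)) →
        (∑ n, ∑ s, y1 n s = M / (1 - β)) →
        ∑ n, ∑ s, R s * (y0 n s + y1 n s)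
          ≤ (N : ℝ) * ∑ s, R s * ((1 / (N : ℝ)) * ∑ n, x0 n s
              + (1 / (N : ℝ)) * ∑ n, x1 n s)) := by
  have hNpos : (0 : ℝ) < N := by exact_mod_cast Nat.lt_of_lt_of_le Nat.zero_lt_one hN
  have hNne : (N : ℝ) ≠ 0 := ne_of_gt hNpos
  -- Part (iii) key identity
  have hobj : (∑ n, ∑ s, R s * (x0 n s + x1 n s))
      = (N : ℝ) * ∑ s, R s * ((1 / (N : ℝ)) * ∑ n, x0 n s
          + (1 / (N : ℝ)) * ∑ n, x1 n s) := by
    rw [Finset.sum_comm, Finset.mul_sum]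
    refine Finset.sum_congr rfl fun s _ => ?_
    rw [← Finset.mul_sum, Finset.sum_add_distrib]
    field_simp
  refine ⟨⟨?_, ?_, ?_⟩, ?_, hobj, ?_⟩
  · intro s
    exact mul_nonneg (by positivity) (Finset.sum_nonneg fun n _ => (hx n).1 s)
  · intro s
    exact mul_nonneg (by positivity) (Finset.sum_nonneg fun n _ => (hx n).2.1 s)
  · intro j
    have h1 : ((1:ℝ) / N) * ∑ n, x0 n j + ((1:ℝ) / N) * ∑ n, x1 n j
        = ((1:ℝ) / N) * ∑ n, (x0 n j + x1 n j) := by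
      rw [Finset.sum_add_distrib]; ring
    have h2 : ∑ n, (x0 n j + x1 n j)
        = ∑ n, (α j + β * ∑ i, (H0 i j * x0 n i + H1 i j * x1 n i)) :=
      Finset.sum_congr rfl fun n _ => (hx n).2.2 j
    rw [h1, h2]
    rw [Finset.sum_add_distrib, Finset.sum_const, Finset.card_univ, Fintype.card_fin,
      ← Finset.mul_sum, Finset.sum_comm]
    have h3 : ∑ i, (H0 i j * (((1:ℝ)/N) * ∑ n, x0 n i)
        + H1 i j * (((1:ℝ)/N) * ∑ n, x1 n i))
        = ((1:ℝ)/N) * ∑ i, ∑ n, (H0 i j * x0 n i + H1 i j * x1 n i) := by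
      rw [Finset.mul_sum]
      refine Finset.sum_congr rfl fun i _ => ?_
      rw [Finset.sum_add_distrib, ← Finset.mul_sum, ← Finset.mul_sum]
      ring
    rw [h3, nsmul_eq_mul]
    field_simp
  · rw [Finset.mul_sum]
    have h4 : ∀ s, (N : ℝ) * (((1:ℝ) / N) * ∑ n, x1 n s) = ∑ n, x1 n s := by
      intro s; field_simp
    simp_rw [h4]
    rw [Finset.sum_comm, hres]
  · intro hopt y0 y1 hy hyres
    calc ∑ n, ∑ s, R s * (y0 n s + y1 n s)
        ≤ ∑ n, ∑ s, R s * (x0 n s + x1 n s) := hopt y0 y1 hy hyres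
      _ = _ := hobj
end

section
/- Fix N ≥ 1 and M > 0. Let V_N be the set of real numbers of the form Σ_{n=1}^N Σ_{s∈S} R_s (x_{n,s}⁰ + x_{n,s}¹) over all tuples (x_1, …, x_N) of points of Q satisfying Σ_{n=1}^N Σ_{s∈S} x_{n,s}¹ = M/(1−β), and let V₁ be the set of real numbers of the form Σ_{s∈S} R_s (x_s⁰ + x_s¹) over all (x⁰, x¹) ∈ Q satisfying Σ_{s∈S} x_s¹ = M/(N(1−β)). Then V_N = { N·v : v ∈ V₁ }. In particular, the optimal value of the N-user homogeneous restless-bandit linear program equals N times the optimal value of the single-user reduced linear program. -/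
open Finset

section Polytope

variable {S : Type*} [Fintype S] (β : ℝ) (H0 H1 : Matrix S S ℝ) (α : S → ℝ)

theorem convex_inPolytope :
    Convex ℝ {p : (S → ℝ) × (S → ℝ) | inPolytope β H0 H1 α p.1 p.2} := by
  rintro ⟨x0, x1⟩ ⟨hx0, hx1, hx⟩ ⟨y0, y1⟩ ⟨hy0, hy1, hy⟩ a b ha hb hab
  refine ⟨fun s => ?_, fun s => ?_, fun j => ?_⟩ <;>
    simp only [Prod.smul_mk, Prod.mk_add_mk, Pi.add_apply, Pi.smul_apply, smul_eq_mul]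
  · exact add_nonneg (mul_nonneg ha (hx0 s)) (mul_nonneg hb (hy0 s))
  · exact add_nonneg (mul_nonneg ha (hx1 s)) (mul_nonneg hb (hy1 s))
  · calc a * x0 j + b * y0 j + (a * x1 j + b * y1 j)
        = a * (x0 j + x1 j) + b * (y0 j + y1 j) := by ring
      _ = (a + b) * α j + β * (a * ∑ i, (H0 i j * x0 i + H1 i j * x1 i)
            + b * ∑ i, (H0 i j * y0 i + H1 i j * y1 i)) := by rw [hx j, hy j]; ring
      _ = _ := by
        rw [hab, one_mul, mul_sum, mul_sum, ← sum_add_distrib]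
        congr 2
        exact sum_congr rfl fun i _ => by ring

theorem inPolytope_average {ι : Type*} [Fintype ι] [Nonempty ι] {x0 x1 : ι → S → ℝ}
    (h : ∀ i, inPolytope β H0 H1 α (x0 i) (x1 i)) :
    inPolytope β H0 H1 α (fun s => (∑ i, x0 i s) / Fintype.card ι)
      (fun s => (∑ i, x1 i s) / Fintype.card ι) := by
  have hcard : (Fintype.card ι : ℝ) ≠ 0 := by positivity
  have := (convex_inPolytope β H0 H1 α).sum_mem (t := univ)
    (w := fun _ => (Fintype.card ι : ℝ)⁻¹) (z := fun i => (x0 i, x1 i))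
    (fun _ _ => by positivity) (by simp [hcard]) (fun i _ => h i)
  have hmean : ∑ i, (Fintype.card ι : ℝ)⁻¹ • (x0 i, x1 i)
      = (fun s => (∑ i, x0 i s) / Fintype.card ι, fun s => (∑ i, x1 i s) / Fintype.card ι) := by
    ext s <;> simp [Prod.fst_sum, Prod.snd_sum, div_eq_inv_mul, mul_sum]
  rwa [hmean] at this

end Polytope

theorem multiuser_values_eq_scaled_single_user_general {S : Type*} [Fintype S]
    (β : ℝ)
    (H0 H1 : Matrix S S ℝ)
    (α : S → ℝ)
    (R : S → ℝ)
    (N : ℕ) (hN : 1 ≤ N) (M : ℝ) :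
    {v : ℝ | ∃ x0 x1 : Fin N → S → ℝ,
        (∀ n, inPolytope β H0 H1 α (x0 n) (x1 n)) ∧
        (∑ n, ∑ s, x1 n s = M / (1 - β)) ∧
        v = ∑ n, ∑ s, R s * (x0 n s + x1 n s)}
      = (fun v : ℝ => (N : ℝ) * v) ''
        {v : ℝ | ∃ x0 x1 : S → ℝ,
          inPolytope β H0 H1 α x0 x1 ∧
          (∑ s, x1 s = M / ((N : ℝ) * (1 - β))) ∧
          v = ∑ s, R s * (x0 s + x1 s)} := by
  have : Nonempty (Fin N) := ⟨⟨0, hN⟩⟩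
  have hN0 : (N : ℝ) ≠ 0 := by positivity
  ext v
  simp only [Set.mem_ofPred_eq, Set.mem_image]
  constructor
  · rintro ⟨x0, x1, hQ, hmass, rfl⟩
    have hmean := inPolytope_average β H0 H1 α hQ
    rw [Fintype.card_fin] at hmean
    refine ⟨(∑ n, ∑ s, R s * (x0 n s + x1 n s)) / N, ⟨_, _, hmean, ?_, ?_⟩,
      mul_div_cancel₀ _ hN0⟩
    · rw [← sum_div, sum_comm, hmass, div_div, mul_comm]
    · simp only [← add_div, ← sum_add_distrib, mul_div_assoc', ← sum_div, mul_sum]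
      rw [sum_comm]
  · rintro ⟨_, ⟨x0, x1, hQ, hmass, rfl⟩, rfl⟩
    refine ⟨fun _ => x0, fun _ => x1, fun _ => hQ, ?_, by simp⟩
    rw [sum_const, card_fin, nsmul_eq_mul, hmass]
    field_simp

/-- The set of objective values of the `N`-user homogeneous restless-bandit LP
equals `N` times the set of objective values of the single-user reduced LP. -/
theorem multiuser_values_eq_scaled_single_user {S : Type*} [Fintype S]
    (β : ℝ) (hβ0 : 0 < β) (hβ1 : β < 1)
    (H0 H1 : Matrix S S ℝ)
    (hH0 : ∀ i j, 0 ≤ H0 i j) (hH1 : ∀ i j, 0 ≤ H1 i j)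
    (α : S → ℝ) (hα : ∀ s, 0 ≤ α s)
    (R : S → ℝ)
    (N : ℕ) (hN : 1 ≤ N) (M : ℝ) (hM : 0 < M) :
    {v : ℝ | ∃ x0 x1 : Fin N → S → ℝ,
        (∀ n, inPolytope β H0 H1 α (x0 n) (x1 n)) ∧
        (∑ n, ∑ s, x1 n s = M / (1 - β)) ∧
        v = ∑ n, ∑ s, R s * (x0 n s + x1 n s)}
      = (fun v : ℝ => (N : ℝ) * v) ''
        {v : ℝ | ∃ x0 x1 : S → ℝ,
          inPolytope β H0 H1 α x0 x1 ∧
          (∑ s, x1 s = M / ((N : ℝ) * (1 - β))) ∧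
          v = ∑ s, R s * (x0 s + x1 s)} :=
  multiuser_values_eq_scaled_single_user_general β H0 H1 α R N hN M
end
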